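/- arXiv:1610.04003 — 6 statements merged into one kernel-verified Lean document; each statement's English description precedes it below -/
import Mathlib

section
/- Let f : ℝ^d → ℝ^d be continuously differentiable with ‖Df(x)‖ ≤ c(1 + ‖x‖^c) for all x and some c > 0. Let 0 < h_min ≤ h_max with h_max = ρ·h_min for some ρ > 0, and let 0 < δ ≤ h_max. Let y ∈ ℝ^d and let h be a real number with h_min < h and h·(1 + ‖y‖^(1+c)) ≤ δ. Then ‖f(y)‖² ≤ (2c + ‖f(0)‖)²·ρ². -/
/-!
Integrating the derivative bound along the segment from `0` to `y` gives the polynomial drift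
bound `‖f y‖ ≤ (2c + ‖f 0‖)(1 + ‖y‖^(1+c))`. A step `h > h_min` with `h (1 + ‖y‖^(1+c)) ≤ δ ≤ ρ h_min`
forces `1 + ‖y‖^(1+c) ≤ ρ`, so the drift bound becomes `‖f y‖ ≤ (2c + ‖f 0‖) ρ`.
-/

open Real

lemma le_one_add_rpow_one_add {t c : ℝ} (ht : 0 ≤ t) (hc : 0 ≤ c) : t ≤ 1 + t ^ (1 + c) := by
  rcases le_total t 1 with ht1 | ht1
  · linarith [rpow_nonneg ht (1 + c)]
  · have : t ^ (1 : ℝ) ≤ t ^ (1 + c) := rpow_le_rpow_of_exponent_le ht1 (by linarith)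
    rw [rpow_one] at this
    linarith

section Drift

variable {E F : Type*} [NormedAddCommGroup E] [NormedSpace ℝ E]
  [NormedAddCommGroup F] [NormedSpace ℝ F]

lemma norm_sub_image_zero_le_of_norm_fderiv_le {f : E → F} (hf : Differentiable ℝ f) {c : ℝ}
    (hc : 0 ≤ c) (hDf : ∀ x, ‖fderiv ℝ f x‖ ≤ c * (1 + ‖x‖ ^ c)) (y : E) :
    ‖f y - f 0‖ ≤ c * (1 + ‖y‖ ^ c) * ‖y‖ := by
  have hball : ∀ x ∈ Metric.closedBall (0 : E) ‖y‖, ‖fderiv ℝ f x‖ ≤ c * (1 + ‖y‖ ^ c) := by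
    intro x hx
    have hxy : ‖x‖ ≤ ‖y‖ := by simpa using hx
    have : ‖x‖ ^ c ≤ ‖y‖ ^ c := rpow_le_rpow (norm_nonneg x) hxy hc
    exact (hDf x).trans (by gcongr)
  simpa using (convex_closedBall (0 : E) ‖y‖).norm_image_sub_le_of_norm_fderiv_le
    (x := 0) (y := y) (fun x _ => hf x) hball (by simp) (by simp)

lemma norm_image_le_of_norm_fderiv_le {f : E → F} (hf : Differentiable ℝ f) {c : ℝ}
    (hc : 0 ≤ c) (hDf : ∀ x, ‖fderiv ℝ f x‖ ≤ c * (1 + ‖x‖ ^ c)) (y : E) :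
    ‖f y‖ ≤ (2 * c + ‖f 0‖) * (1 + ‖y‖ ^ (1 + c)) := by
  have hy := norm_nonneg y
  have hpow : ‖y‖ ^ c * ‖y‖ = ‖y‖ ^ (1 + c) := by
    rw [rpow_add' hy (by positivity), rpow_one, mul_comm]
  have hmv := norm_sub_image_zero_le_of_norm_fderiv_le hf hc hDf y
  have hlin := le_one_add_rpow_one_add hy hc
  have hpos := rpow_nonneg hy (1 + c)
  have htri : ‖f y‖ ≤ ‖f 0‖ + ‖f y - f 0‖ := norm_le_insert' (f y) (f 0)
  nlinarith [norm_nonneg (f 0)]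

end Drift

lemma le_of_mul_le_mul_of_le {a b w ρ : ℝ} (ha : 0 < a) (hab : a ≤ b) (hw : 0 ≤ w)
    (hbw : b * w ≤ ρ * a) : w ≤ ρ := by
  have : w * a ≤ ρ * a := by nlinarith
  exact le_of_mul_le_mul_right this ha

theorem admissible_part_ii_general (d : ℕ)
    (f : EuclideanSpace ℝ (Fin d) → EuclideanSpace ℝ (Fin d))
    (hf : ContDiff ℝ 1 f) (c : ℝ) (hc : 0 < c)
    (hDf : ∀ x, ‖fderiv ℝ f x‖ ≤ c * (1 + ‖x‖ ^ c))
    (hmin hmax ρ δ : ℝ)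
    (hmin_pos : 0 < hmin)
    (hratio : hmax = ρ * hmin)
    (hδ : δ ≤ hmax)
    (y : EuclideanSpace ℝ (Fin d)) (h : ℝ)
    (hh : hmin < h) (hstep : h * (1 + ‖y‖ ^ (1 + c)) ≤ δ) :
    ‖f y‖ ^ 2 ≤ (2 * c + ‖f 0‖) ^ 2 * ρ ^ 2 := by
  have hdrift := norm_image_le_of_norm_fderiv_le (hf.differentiable one_ne_zero) hc.le hDf y
  have hw : 1 + ‖y‖ ^ (1 + c) ≤ ρ :=
    le_of_mul_le_mul_of_le hmin_pos hh.le (by positivity) (hstep.trans (hratio ▸ hδ))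
  have hbound : ‖f y‖ ≤ (2 * c + ‖f 0‖) * ρ := hdrift.trans (by gcongr)
  rw [← mul_pow]
  exact pow_le_pow_left₀ (norm_nonneg _) hbound 2

theorem admissible_part_ii (d : ℕ)
    (f : EuclideanSpace ℝ (Fin d) → EuclideanSpace ℝ (Fin d))
    (hf : ContDiff ℝ 1 f) (c : ℝ) (hc : 0 < c)
    (hDf : ∀ x, ‖fderiv ℝ f x‖ ≤ c * (1 + ‖x‖ ^ c))
    (hmin hmax ρ δ : ℝ)
    (hmin_pos : 0 < hmin) (hminmax : hmin ≤ hmax)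
    (hρ : 0 < ρ) (hratio : hmax = ρ * hmin)
    (hδ_pos : 0 < δ) (hδ : δ ≤ hmax)
    (y : EuclideanSpace ℝ (Fin d)) (h : ℝ)
    (hh : hmin < h) (hstep : h * (1 + ‖y‖ ^ (1 + c)) ≤ δ) :
    ‖f y‖ ^ 2 ≤ (2 * c + ‖f 0‖) ^ 2 * ρ ^ 2 :=
  admissible_part_ii_general d f hf c hc hDf hmin hmax ρ δ hmin_pos hratio hδ y h hh hstep
end

section
/- Let f : ℝ^d → ℝ^d be continuously differentiable with ‖Df(x)‖ ≤ c(1 + ‖x‖^c) for all x and some c > 0. Let 0 < h_min ≤ h_max with h_max = ρ·h_min for some ρ > 0, and let 0 < δ ≤ h_max. Let y ∈ ℝ^d and let h be a real number with h_min < h and h·(1 + ‖y‖^(1+c)) ≤ δ·‖y‖. Then ‖f(y)‖² ≤ (2c + ‖f(0)‖)²·ρ²·‖y‖². -/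
/-!
By the mean value theorem on the ball of radius `‖y‖`, the derivative bound gives the polynomial
drift bound `‖f y‖ ≤ (2c + ‖f 0‖)(1 + ‖y‖^(1+c))`. An admissible step `h > h_min` forces
`1 + ‖y‖^(1+c) ≤ (δ / h_min) ‖y‖ ≤ ρ ‖y‖`, so the drift is at most linear in `‖y‖`.
-/

open Metric

theorem le_one_add_rpow {t p : ℝ} (ht : 0 ≤ t) (hp : 1 ≤ p) : t ≤ 1 + t ^ p := by
  rcases le_or_gt t 1 with hle | hgt
  · linarith [Real.rpow_nonneg ht p]
  · linarith [Real.self_le_rpow_of_one_le hgt.le hp]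

section Drift

variable {E F : Type*} [NormedAddCommGroup E] [NormedSpace ℝ E]
  [NormedAddCommGroup F] [NormedSpace ℝ F] {f : E → F} {c : ℝ}

theorem norm_sub_apply_zero_le_of_norm_fderiv_le (hf : Differentiable ℝ f) (hc : 0 ≤ c)
    (hDf : ∀ x, ‖fderiv ℝ f x‖ ≤ c * (1 + ‖x‖ ^ c)) (y : E) :
    ‖f y - f 0‖ ≤ c * (1 + ‖y‖ ^ c) * ‖y‖ := by
  have hbound : ∀ x ∈ closedBall (0 : E) ‖y‖, ‖fderiv ℝ f x‖ ≤ c * (1 + ‖y‖ ^ c) := by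
    intro x hx
    rw [mem_closedBall_zero_iff] at hx
    exact (hDf x).trans (by gcongr)
  simpa using (convex_closedBall (0 : E) ‖y‖).norm_image_sub_le_of_norm_fderiv_le
    (fun x _ => hf x) hbound (mem_closedBall_self (norm_nonneg y))
    (mem_closedBall_zero_iff.mpr le_rfl)

theorem norm_apply_le_of_norm_fderiv_le (hf : Differentiable ℝ f) (hc : 0 ≤ c)
    (hDf : ∀ x, ‖fderiv ℝ f x‖ ≤ c * (1 + ‖x‖ ^ c)) (y : E) :
    ‖f y‖ ≤ (2 * c + ‖f 0‖) * (1 + ‖y‖ ^ (1 + c)) := by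
  have hpow : ‖y‖ ^ (1 + c) = ‖y‖ * ‖y‖ ^ c := by
    rw [Real.rpow_add' (norm_nonneg y) (by linarith), Real.rpow_one]
  have hy : ‖y‖ ≤ 1 + ‖y‖ ^ (1 + c) := le_one_add_rpow (norm_nonneg y) (by linarith)
  have hpos : 0 ≤ ‖y‖ ^ (1 + c) := Real.rpow_nonneg (norm_nonneg y) _
  calc ‖f y‖ ≤ ‖f 0‖ + ‖f y - f 0‖ := norm_le_norm_add_norm_sub' (f y) (f 0)
    _ ≤ ‖f 0‖ + (c * ‖y‖ + c * ‖y‖ ^ (1 + c)) := by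
        rw [hpow]
        linarith [norm_sub_apply_zero_le_of_norm_fderiv_le hf hc hDf y]
    _ ≤ (2 * c + ‖f 0‖) * (1 + ‖y‖ ^ (1 + c)) := by
        nlinarith [norm_nonneg (f 0)]

end Drift

theorem le_mul_of_step_le {hmin h δ ρ A t : ℝ} (hmin_pos : 0 < hmin) (hh : hmin < h)
    (hA : 0 ≤ A) (ht : 0 ≤ t) (hδ : δ ≤ ρ * hmin) (hstep : h * A ≤ δ * t) :
    A ≤ ρ * t := by
  have : hmin * A ≤ hmin * (ρ * t) := by
    nlinarith [mul_le_mul_of_nonneg_right hh.le hA, mul_le_mul_of_nonneg_right hδ ht]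
  exact le_of_mul_le_mul_left this hmin_pos

theorem admissible_part_iv_general (d : ℕ)
    (f : EuclideanSpace ℝ (Fin d) → EuclideanSpace ℝ (Fin d))
    (hf : ContDiff ℝ 1 f) (c : ℝ) (hc : 0 < c)
    (hDf : ∀ x, ‖fderiv ℝ f x‖ ≤ c * (1 + ‖x‖ ^ c))
    (hmin hmax ρ δ : ℝ)
    (hmin_pos : 0 < hmin)
    (hratio : hmax = ρ * hmin)
    (hδ : δ ≤ hmax)
    (y : EuclideanSpace ℝ (Fin d)) (h : ℝ)
    (hh : hmin < h) (hstep : h * (1 + ‖y‖ ^ (1 + c)) ≤ δ * ‖y‖) :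
    ‖f y‖ ^ 2 ≤ (2 * c + ‖f 0‖) ^ 2 * ρ ^ 2 * ‖y‖ ^ 2 := by
  have hstep' : 1 + ‖y‖ ^ (1 + c) ≤ ρ * ‖y‖ :=
    le_mul_of_step_le hmin_pos hh (by positivity) (norm_nonneg y) (hratio ▸ hδ) hstep
  have hlin : ‖f y‖ ≤ (2 * c + ‖f 0‖) * (ρ * ‖y‖) :=
    (norm_apply_le_of_norm_fderiv_le (hf.differentiable one_ne_zero) hc.le hDf y).trans
      (by gcongr)
  calc ‖f y‖ ^ 2 ≤ ((2 * c + ‖f 0‖) * (ρ * ‖y‖)) ^ 2 := by gcongr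
    _ = (2 * c + ‖f 0‖) ^ 2 * ρ ^ 2 * ‖y‖ ^ 2 := by ring

theorem admissible_part_iv (d : ℕ)
    (f : EuclideanSpace ℝ (Fin d) → EuclideanSpace ℝ (Fin d))
    (hf : ContDiff ℝ 1 f) (c : ℝ) (hc : 0 < c)
    (hDf : ∀ x, ‖fderiv ℝ f x‖ ≤ c * (1 + ‖x‖ ^ c))
    (hmin hmax ρ δ : ℝ)
    (hmin_pos : 0 < hmin) (hminmax : hmin ≤ hmax)
    (hρ : 0 < ρ) (hratio : hmax = ρ * hmin)
    (hδ_pos : 0 < δ) (hδ : δ ≤ hmax)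
    (y : EuclideanSpace ℝ (Fin d)) (h : ℝ)
    (hh : hmin < h) (hstep : h * (1 + ‖y‖ ^ (1 + c)) ≤ δ * ‖y‖) :
    ‖f y‖ ^ 2 ≤ (2 * c + ‖f 0‖) ^ 2 * ρ ^ 2 * ‖y‖ ^ 2 :=
  admissible_part_iv_general d f hf c hc hDf hmin hmax ρ δ hmin_pos hratio hδ y h hh hstep
end

section
/- Let 0 < h_min ≤ h_max with h_max = ρ·h_min for some ρ > 0, and let 0 ≤ ε < h_max²/(1 + h_max). Let f : ℝ^d → ℝ^d and y ∈ ℝ^d with f(y) ≠ 0, and define the adaptive stepsize h(y) = max( h_min, min( h_max, (ε + √(ε² + 4ε))/(2‖f(y)‖) ) ). If h_min < h(y), then ‖f(y)‖² ≤ ρ². -/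
theorem taming_strategy_admissible (d : ℕ) (hmin hmax ρ ε : ℝ)
    (hmin_pos : 0 < hmin) (hminmax : hmin ≤ hmax)
    (hρ : 0 < ρ) (hratio : hmax = ρ * hmin)
    (hε0 : 0 ≤ ε) (hε1 : ε < hmax ^ 2 / (1 + hmax))
    (f : EuclideanSpace ℝ (Fin d) → EuclideanSpace ℝ (Fin d))
    (y : EuclideanSpace ℝ (Fin d)) (hfy : f y ≠ 0)
    (hlt : hmin <
        max hmin (min hmax ((ε + Real.sqrt (ε ^ 2 + 4 * ε)) / (2 * ‖f y‖)))) :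
    ‖f y‖ ^ 2 ≤ ρ ^ 2 := by
  set t := ‖f y‖ with ht
  have ht0 : 0 < t := norm_pos_iff.mpr hfy
  have hmax_pos : 0 < hmax := lt_of_lt_of_le hmin_pos hminmax
  have hεdiv : ε * (1 + hmax) < hmax ^ 2 := by
    have h1 : 0 < 1 + hmax := by linarith
    calc ε * (1 + hmax) < hmax ^ 2 / (1 + hmax) * (1 + hmax) := by
          exact mul_lt_mul_of_pos_right hε1 h1
      _ = hmax ^ 2 := by field_simp
  set s := Real.sqrt (ε ^ 2 + 4 * ε) with hs
  have hs0 : 0 ≤ s := Real.sqrt_nonneg _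
  have hs2 : s ^ 2 = ε ^ 2 + 4 * ε := Real.sq_sqrt (by nlinarith)
  set x := (ε + s) / 2 with hx
  have hx0 : 0 ≤ x := by positivity
  have hxeq : x ^ 2 = ε * (x + 1) := by
    have : s ^ 2 = ε ^ 2 + 4 * ε := hs2
    field_simp [hx]
    nlinarith [this]
  -- from hlt, hmin < x / t
  have h1 : hmin < min hmax ((ε + s) / (2 * t)) := by
    rcases lt_max_iff.mp hlt with h | h
    · exact absurd h (lt_irrefl _)
    · exact h
  have h2 : hmin < (ε + s) / (2 * t) := lt_of_lt_of_le h1 (min_le_right _ _)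
  have h3 : t * hmin < x := by
    have := (lt_div_iff₀ (by positivity : (0:ℝ) < 2 * t)).mp h2
    nlinarith [this]
  -- x < hmax
  have hxlt : x < hmax := by
    by_contra hc
    push_neg at hc
    have hmono : hmax ^ 2 * (1 + x) ≤ x ^ 2 * (1 + hmax) := by
      nlinarith [mul_nonneg (sub_nonneg.mpr hc) (by positivity : (0:ℝ) ≤ x * hmax + x + hmax)]
    nlinarith [hxeq, mul_lt_mul_of_pos_right hεdiv (by positivity : (0:ℝ) < 1 + x), hmono]
  have htρ : t < ρ := by
    have : t * hmin < ρ * hmin := by linarith [hratio ▸ lt_of_lt_of_le h3 hxlt.le]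
    exact lt_of_mul_lt_mul_right this hmin_pos.le
  nlinarith [htρ, ht0]
end

section
/- Let γ, ν, h > 0 be real numbers and define F : ℝ → ℝ by F(x) = x − hγ·x·|x|^ν. Let p = (2/(hγ))^(1/ν). Then p > 0, F(p) = −p and F(−p) = p; consequently F(F(p)) = p while F(p) ≠ p, so {p, −p} is a two-cycle of F. -/
theorem euler_map_two_cycle (γ ν h : ℝ) (hγ : 0 < γ) (hν : 0 < ν) (hh : 0 < h)
    (F : ℝ → ℝ) (hF : ∀ x, F x = x - h * γ * x * |x| ^ ν)
    (p : ℝ) (hp : p = (2 / (h * γ)) ^ (1 / ν)) :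
    0 < p ∧ F p = -p ∧ F (-p) = p ∧ F (F p) = p ∧ F p ≠ p := by
  have hhg : 0 < h * γ := mul_pos hh hγ
  have hbase : (0:ℝ) < 2 / (h * γ) := by positivity
  have hp0 : 0 < p := by rw [hp]; positivity
  have habs : |p| = p := abs_of_pos hp0
  have hpow : p ^ ν = 2 / (h * γ) := by
    rw [hp, ← Real.rpow_mul hbase.le, one_div, inv_mul_cancel₀ hν.ne', Real.rpow_one]
  have key : h * γ * p * |p| ^ ν = 2 * p := by
    rw [habs, hpow]
    field_simp
  have hFp : F p = -p := by rw [hF, key]; ring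
  have hFnp : F (-p) = p := by
    rw [hF, abs_neg, habs]
    have : h * γ * -p * p ^ ν = -(2 * p) := by
      rw [hpow]; field_simp
    rw [this]; ring
  refine ⟨hp0, hFp, hFnp, by rw [hFp, hFnp], ?_⟩
  rw [hFp]
  intro hEq
  have : p = 0 := by linarith
  exact hp0.ne' this
end

section
/- Let γ, ν, h > 0 be real numbers, define F : ℝ → ℝ by F(x) = x − hγ·x·|x|^ν, and let p = (2/(hγ))^(1/ν). Then the composition F ∘ F is differentiable at p with derivative (F ∘ F)′(p) = (2ν + 1)², and (2ν + 1)² > 1; in particular the two-cycle {p, −p} of F is unstable. -/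
/-!
Away from the origin `x ↦ x * |x| ^ ν` has derivative `(ν + 1) * |x| ^ ν`, so
`F' x = 1 - h γ (ν + 1) |x| ^ ν`. At both points of the two-cycle `h γ |±p| ^ ν = 2`, hence
`F' (±p) = -(2ν + 1)` and the chain rule gives `(F ∘ F)' p = (2ν + 1) ^ 2 > 1`.
-/

theorem hasDerivAt_mul_abs_rpow {ν x : ℝ} (hx : x ≠ 0) :
    HasDerivAt (fun y ↦ y * |y| ^ ν) ((ν + 1) * |x| ^ ν) x := by
  have habs : HasDerivAt (fun y ↦ |y| ^ ν) (SignType.sign x * ν * |x| ^ (ν - 1)) x :=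
    (hasDerivAt_abs hx).rpow_const (Or.inl (abs_ne_zero.2 hx))
  refine ((hasDerivAt_id' x).mul habs).congr_deriv ?_
  have hpow : |x| * |x| ^ (ν - 1) = |x| ^ ν := by
    rw [Real.rpow_sub_one (abs_ne_zero.2 hx), mul_div_cancel₀ _ (abs_ne_zero.2 hx)]
  have hsign : x * SignType.sign x = |x| := self_mul_sign x
  linear_combination ν * |x| ^ (ν - 1) * hsign + ν * hpow

theorem hasDerivAt_sub_mul_mul_abs_rpow (c ν : ℝ) {x : ℝ} (hx : x ≠ 0) :
    HasDerivAt (fun y ↦ y - c * y * |y| ^ ν) (1 - c * (ν + 1) * |x| ^ ν) x := by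
  have := (hasDerivAt_id' x).fun_sub ((hasDerivAt_mul_abs_rpow (ν := ν) hx).const_mul c)
  simpa only [mul_assoc] using this

theorem hasDerivAt_sub_mul_mul_abs_rpow_of_mul_abs_rpow_eq_two {c ν x : ℝ} (hx : x ≠ 0)
    (hcx : c * |x| ^ ν = 2) :
    HasDerivAt (fun y ↦ y - c * y * |y| ^ ν) (-(2 * ν + 1)) x :=
  (hasDerivAt_sub_mul_mul_abs_rpow c ν hx).congr_deriv (by linear_combination -(ν + 1) * hcx)

theorem two_cycle_unstable (γ ν h : ℝ) (hγ : 0 < γ) (hν : 0 < ν) (hh : 0 < h)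
    (F : ℝ → ℝ) (hF : ∀ x, F x = x - h * γ * x * |x| ^ ν)
    (p : ℝ) (hp : p = (2 / (h * γ)) ^ (1 / ν)) :
    HasDerivAt (F ∘ F) ((2 * ν + 1) ^ 2) p ∧ 1 < (2 * ν + 1) ^ 2 := by
  obtain rfl : F = fun x ↦ x - h * γ * x * |x| ^ ν := funext hF
  have hhγ : 0 < h * γ := mul_pos hh hγ
  have hp_pos : 0 < p := hp ▸ by positivity
  have hp_pow : h * γ * |p| ^ ν = 2 := by
    rw [abs_of_pos hp_pos, hp, one_div, Real.rpow_inv_rpow (by positivity) hν.ne']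
    field_simp
  have hFp : p - h * γ * p * |p| ^ ν = -p := by linear_combination -p * hp_pow
  have hderiv_p := hasDerivAt_sub_mul_mul_abs_rpow_of_mul_abs_rpow_eq_two hp_pos.ne' hp_pow
  have hderiv_neg_p := hasDerivAt_sub_mul_mul_abs_rpow_of_mul_abs_rpow_eq_two
    (neg_ne_zero.2 hp_pos.ne') (by rwa [abs_neg])
  exact ⟨((hFp ▸ hderiv_neg_p).comp p hderiv_p).congr_deriv (by ring), by nlinarith⟩
end

section
/- Let γ, ν, h > 0 be real numbers, define F : ℝ → ℝ by F(x) = x − hγ·x·|x|^ν, and let p = (2/(hγ))^(1/ν). Then for every x₀ ∈ ℝ with |x₀| < p, the sequence of iterates F^[n](x₀) converges to 0 as n → ∞; that is, the interval (−p, p) lies in the basin of attraction of the fixed point 0 of F. -/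
theorem euler_map_basin_of_attraction (γ ν h : ℝ)
    (hγ : 0 < γ) (hν : 0 < ν) (hh : 0 < h)
    (F : ℝ → ℝ) (hF : ∀ x, F x = x - h * γ * x * |x| ^ ν)
    (p : ℝ) (hp : p = (2 / (h * γ)) ^ (1 / ν)) :
    ∀ x₀ : ℝ, |x₀| < p →
      Filter.Tendsto (fun n => F^[n] x₀) Filter.atTop (nhds 0) := by
  intro x₀ hx₀
  set c := h * γ with hc
  have hc0 : 0 < c := mul_pos hh hγ
  have hpν : p ^ ν = 2 / c := by
    rw [hp, ← Real.rpow_mul (by positivity), one_div_mul_cancel hν.ne',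
      Real.rpow_one]
  -- the absolute value recursion
  have habsF : ∀ x : ℝ, |F x| = |x| * |1 - c * |x| ^ ν| := by
    intro x
    have : F x = x * (1 - c * |x| ^ ν) := by rw [hF x]; ring
    rw [this, abs_mul]
  have hfac : ∀ x : ℝ, |x| < p → |1 - c * |x| ^ ν| ≤ 1 := by
    intro x hx
    have h1 : |x| ^ ν < p ^ ν := Real.rpow_lt_rpow (abs_nonneg x) hx hν
    have h2 : c * |x| ^ ν < 2 := by
      rw [hpν] at h1
      calc c * |x| ^ ν < c * (2 / c) := by exact (mul_lt_mul_iff_right₀ hc0).mpr h1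
        _ = 2 := by field_simp
    have h3 : 0 ≤ c * |x| ^ ν := by positivity
    rw [abs_le]; constructor <;> linarith
  have hkey : ∀ x : ℝ, |x| < p → |F x| ≤ |x| := by
    intro x hx
    rw [habsF x]
    calc |x| * |1 - c * |x| ^ ν| ≤ |x| * 1 :=
          mul_le_mul_of_nonneg_left (hfac x hx) (abs_nonneg x)
      _ = |x| := mul_one _
  set a : ℕ → ℝ := fun n => |F^[n] x₀| with ha
  have hlt : ∀ n, a n < p := by
    intro n
    induction n with
    | zero => simpa [ha] using hx₀
    | succ k ih =>
      have : a (k + 1) ≤ a k := by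
        simp only [ha, Function.iterate_succ_apply']
        exact hkey _ ih
      exact lt_of_le_of_lt this ih
  have hdec : ∀ n, a (n + 1) ≤ a n := by
    intro n
    simp only [ha, Function.iterate_succ_apply']
    exact hkey _ (hlt n)
  have hanti : Antitone a := antitone_nat_of_succ_le hdec
  have hbdd : BddBelow (Set.range a) := ⟨0, by rintro y ⟨n, rfl⟩; exact abs_nonneg _⟩
  set L := ⨅ n, a n with hL
  have hLlim : Filter.Tendsto a Filter.atTop (nhds L) :=
    tendsto_atTop_ciInf hanti hbdd
  have hL0 : 0 ≤ L := le_ciInf fun n => abs_nonneg _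
  have hLp : L < p := lt_of_le_of_lt (ciInf_le hbdd 0) (hlt 0)
  -- recursion in the limit
  have hrec : ∀ n, a (n + 1) = a n * |1 - c * a n ^ ν| := by
    intro n
    simp only [ha, Function.iterate_succ_apply']
    rw [habsF]
  have hcont : ContinuousAt (fun t : ℝ => t * |1 - c * t ^ ν|) L := by
    have h1 : ContinuousAt (fun t : ℝ => t ^ ν) L :=
      Real.continuousAt_rpow_const L ν (Or.inr hν.le)
    exact continuousAt_id.mul (((continuousAt_const.mul h1).const_sub 1).abs)
  have hlim1 : Filter.Tendsto (fun n => a (n + 1)) Filter.atTop (nhds L) :=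
    hLlim.comp (Filter.tendsto_add_atTop_nat 1)
  have hlim2 : Filter.Tendsto (fun n => a n * |1 - c * a n ^ ν|) Filter.atTop
      (nhds (L * |1 - c * L ^ ν|)) := hcont.tendsto.comp hLlim
  have hfix : L = L * |1 - c * L ^ ν| := by
    refine tendsto_nhds_unique ?_ hlim2
    simpa only [← hrec] using hlim1
  have hLzero : L = 0 := by
    by_contra hne
    have hLpos : 0 < L := lt_of_le_of_ne hL0 (Ne.symm hne)
    have h1 : |1 - c * L ^ ν| = 1 := by
      have h0 : L * |1 - c * L ^ ν| = L * 1 := by rw [mul_one]; exact hfix.symm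
      rcases mul_eq_mul_left_iff.mp h0 with h | h
      · exact h
      · exact absurd h hne
    have h2 : L ^ ν < p ^ ν := Real.rpow_lt_rpow hL0 hLp hν
    have h3 : 0 < L ^ ν := Real.rpow_pos_of_pos hLpos ν
    rw [hpν] at h2
    rcases abs_eq (by norm_num : (0:ℝ) ≤ 1) |>.mp h1 with h | h
    · -- c * L^ν = 0, impossible
      have : c * L ^ ν = 0 := by linarith
      have : 0 < c * L ^ ν := mul_pos hc0 h3
      linarith
    · -- c * L^ν = 2, i.e. L^ν = 2/c = p^ν, contradicting L < p
      have hcl : c * L ^ ν = 2 := by linarith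
      have : c * L ^ ν < c * (2 / c) := (mul_lt_mul_iff_right₀ hc0).mpr h2
      rw [mul_div_cancel₀ 2 hc0.ne'] at this
      linarith
  -- conclude
  have habs : Filter.Tendsto (fun n => |F^[n] x₀|) Filter.atTop (nhds 0) := by
    rw [← hLzero]; exact hLlim
  rw [show (0:ℝ) = 0 from rfl]
  refine tendsto_zero_iff_norm_tendsto_zero.mpr ?_
  simpa [Real.norm_eq_abs] using habs
end
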